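/- Let 0 < 1/m ≪ d' ≪ 1/k ≪ ε ≪ d ≪ ζ ≤ 1/2 and let G be an (ε, d', ζd', d'/d)-superregular bipartite graph with vertex classes U and V of size m. Then G has a perfect matching. -/

import Mathlib

/-! Hall's condition is checked in two regimes. For `#S ≤ εm`, Cauchy–Schwarz on the degrees into
`S` gives `(#S · δ)² ≤ #N(S) · ∑_{u,u' ∈ S} codeg(u,u')`, and the bounds `Δ ≤ cm`, `codeg ≤ c²m`
make the right side at most `#N(S) · #S · δ²` once `cm + εm · c²m ≤ δ²`. For larger `S` the
complement `T` of `N(S)` receives no edge from `S`, so regularity forces `#T < εm`; the first case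
on the other side then gives `#T ≤ #N(T) ≤ #Sᶜ`, which is Hall's condition for `S`. -/

open Finset
open scoped Classical

/-- Number of edges of a bipartite graph `G` between `X` and `Y`. -/
noncomputable def eCnt {A B : Type*} [Fintype A] [Fintype B] (G : A → B → Prop)
    (X : Finset A) (Y : Finset B) : ℕ :=
  ((X ×ˢ Y).filter (fun p => G p.1 p.2)).card

/-- Density of the bipartite graph `G` between `X` and `Y`. -/
noncomputable def dens {A B : Type*} [Fintype A] [Fintype B] (G : A → B → Prop)
    (X : Finset A) (Y : Finset B) : ℝ :=
  (eCnt G X Y : ℝ) / ((X.card : ℝ) * (Y.card : ℝ))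

/-- `G` (bipartite with classes of size `m`) is (ε,d,c)-regular in the sparse sense:
(Reg1) all pairs of sets of size at least `εm` have density `(1±ε)d`;
(Reg2) any two distinct vertices in the same class have at most `c²m` common neighbours;
(Reg3) the maximum degree is at most `cm`. -/
def SparseRegularPair {A B : Type*} [Fintype A] [Fintype B] (G : A → B → Prop)
    (ε d c : ℝ) (m : ℕ) : Prop :=
  (∀ X : Finset A, ∀ Y : Finset B, ε * (m : ℝ) ≤ (X.card : ℝ) → ε * (m : ℝ) ≤ (Y.card : ℝ) →
    (1 - ε) * d ≤ dens G X Y ∧ dens G X Y ≤ (1 + ε) * d) ∧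
  (∀ u u' : A, u ≠ u' →
    ((Finset.univ.filter (fun b => G u b ∧ G u' b)).card : ℝ) ≤ c ^ 2 * (m : ℝ)) ∧
  (∀ v v' : B, v ≠ v' →
    ((Finset.univ.filter (fun a => G a v ∧ G a v')).card : ℝ) ≤ c ^ 2 * (m : ℝ)) ∧
  (∀ a : A, ((Finset.univ.filter (fun b => G a b)).card : ℝ) ≤ c * (m : ℝ)) ∧
  (∀ b : B, ((Finset.univ.filter (fun a => G a b)).card : ℝ) ≤ c * (m : ℝ))

/-- `G` is (ε,d,d*,c)-superregular: (ε,d,c)-regular and with minimum degree at least `d* m`. -/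
def SparseSuperRegularPair {A B : Type*} [Fintype A] [Fintype B] (G : A → B → Prop)
    (ε d dstar c : ℝ) (m : ℕ) : Prop :=
  SparseRegularPair G ε d c m ∧
  (∀ a : A, dstar * (m : ℝ) ≤ ((Finset.univ.filter (fun b => G a b)).card : ℝ)) ∧
  (∀ b : B, dstar * (m : ℝ) ≤ ((Finset.univ.filter (fun a => G a b)).card : ℝ))

section Expansion

variable {A B : Type*} (G : A → B → Prop)

lemma sum_card_bipartiteBelow_sq (S : Finset A) (t : Finset B) :
    ∑ v ∈ t, #(S.bipartiteBelow G v) ^ 2 = ∑ u ∈ S, ∑ u' ∈ S, #{v ∈ t | G u v ∧ G u' v} := by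
  have hsq : ∀ v, #(S.bipartiteBelow G v) ^ 2 =
      #((S ×ˢ S).bipartiteBelow (fun p v => G p.1 v ∧ G p.2 v) v) := by
    intro v
    rw [sq, ← card_product, bipartiteBelow, bipartiteBelow,
      filter_product (p := (G · v)) (q := (G · v))]
  simp_rw [hsq, ← sum_card_bipartiteAbove_eq_sum_card_bipartiteBelow, sum_product]
  rfl

variable [Fintype B]

noncomputable def nbhd (S : Finset A) : Finset B := {v | ∃ u ∈ S, G u v}

lemma sum_sum_card_common_le {S : Finset A} {Δ κ : ℝ} (hκ : 0 ≤ κ)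
    (hmax : ∀ u ∈ S, (#{v | G u v} : ℝ) ≤ Δ)
    (hcodeg : ∀ u ∈ S, ∀ u' ∈ S, u ≠ u' → (#{v | G u v ∧ G u' v} : ℝ) ≤ κ) :
    ∑ u ∈ S, ∑ u' ∈ S, (#{v | G u v ∧ G u' v} : ℝ) ≤ #S * (Δ + #S * κ) := by
  have hrow : ∀ u ∈ S, ∑ u' ∈ S, (#{v | G u v ∧ G u' v} : ℝ) ≤ Δ + #S * κ := by
    intro u hu
    rw [← add_sum_erase S _ hu]
    have hdiag : (#{v | G u v ∧ G u v} : ℝ) ≤ Δ := by simpa only [and_self] using hmax u hu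
    have hoff : ∑ u' ∈ S.erase u, (#{v | G u v ∧ G u' v} : ℝ) ≤ #S * κ :=
      calc _ ≤ #(S.erase u) • κ :=
            sum_le_card_nsmul _ _ _ fun u' hu' => hcodeg u hu u' (mem_of_mem_erase hu')
              (ne_of_mem_erase hu').symm
        _ ≤ #S * κ := by
            rw [nsmul_eq_mul]
            gcongr
            exact erase_subset u S
    linarith
  simpa only [sum_const, nsmul_eq_mul] using sum_le_sum hrow

theorem card_le_card_nbhd_of_codegree_le {S : Finset A} {δ Δ κ : ℝ} (hδ : 0 < δ) (hκ : 0 ≤ κ)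
    (hmin : ∀ u ∈ S, δ ≤ #{v | G u v}) (hmax : ∀ u ∈ S, (#{v | G u v} : ℝ) ≤ Δ)
    (hcodeg : ∀ u ∈ S, ∀ u' ∈ S, u ≠ u' → (#{v | G u v ∧ G u' v} : ℝ) ≤ κ)
    (hsize : Δ + #S * κ ≤ δ ^ 2) :
    #S ≤ #(nbhd G S) := by
  rcases S.eq_empty_or_nonempty with rfl | hS
  · simp
  set N := nbhd G S
  set E : ℝ := ∑ v ∈ N, (#(S.bipartiteBelow G v) : ℝ)
  have hE : #S * δ ≤ E := by
    have hnbr : ∀ u ∈ S, N.bipartiteAbove G u = ({v | G u v} : Finset B) := by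
      intro u hu
      ext v
      simpa [N, nbhd, bipartiteAbove] using fun h => ⟨u, hu, h⟩
    calc #S * δ = ∑ _u ∈ S, δ := by rw [sum_const, nsmul_eq_mul]
      _ ≤ ∑ u ∈ S, (#(N.bipartiteAbove G u) : ℝ) :=
          sum_le_sum fun u hu => by rw [hnbr u hu]; exact hmin u hu
      _ = E := by
          simp only [E]
          exact_mod_cast sum_card_bipartiteAbove_eq_sum_card_bipartiteBelow (s := S) (t := N) G
  have hsq : ∑ v ∈ N, (#(S.bipartiteBelow G v) : ℝ) ^ 2 ≤ #S * δ ^ 2 :=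
    calc _ = ∑ u ∈ S, ∑ u' ∈ S, (#{v ∈ N | G u v ∧ G u' v} : ℝ) := by
          exact_mod_cast sum_card_bipartiteBelow_sq G S N
      _ ≤ ∑ u ∈ S, ∑ u' ∈ S, (#{v | G u v ∧ G u' v} : ℝ) := by
          gcongr
          exact subset_univ N
      _ ≤ #S * (Δ + #S * κ) := sum_sum_card_common_le G hκ hmax hcodeg
      _ ≤ #S * δ ^ 2 := by gcongr
  have hs : (0 : ℝ) < #S * δ ^ 2 := by have := hS.card_pos; positivity
  have key : (#S : ℝ) * (#S * δ ^ 2) ≤ #N * (#S * δ ^ 2) :=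
    calc (#S : ℝ) * (#S * δ ^ 2) = (#S * δ) ^ 2 := by ring
      _ ≤ E ^ 2 := by gcongr
      _ ≤ #N * ∑ v ∈ N, (#(S.bipartiteBelow G v) : ℝ) ^ 2 := sq_sum_le_card_mul_sum_sq
      _ ≤ #N * (#S * δ ^ 2) := by gcongr
  exact_mod_cast le_of_mul_le_mul_right key hs

end Expansion

section Regularity

variable {A B : Type*} [Fintype A] [Fintype B] {G : A → B → Prop}

lemma eCnt_flip (X : Finset A) (Y : Finset B) : eCnt (fun b a => G a b) Y X = eCnt G X Y :=
  card_nbij' Prod.swap Prod.swap (fun p hp => by simp_all [and_comm]) (fun p hp => by simp_all [and_comm])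
    (fun _ _ => rfl) (fun _ _ => rfl)

lemma dens_flip (X : Finset A) (Y : Finset B) : dens (fun b a => G a b) Y X = dens G X Y := by
  rw [_root_.dens, _root_.dens, eCnt_flip, mul_comm]

lemma dens_eq_zero_of_forall_not {X : Finset A} {Y : Finset B} (h : ∀ x ∈ X, ∀ y ∈ Y, ¬G x y) :
    dens G X Y = 0 := by
  rw [_root_.dens, eCnt, filter_false_of_mem fun p hp => h p.1 (mem_product.1 hp).1 p.2
    (mem_product.1 hp).2]
  simp

variable {ε d dstar c : ℝ} {m : ℕ}

lemma SparseRegularPair.flip (hG : SparseRegularPair G ε d c m) :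
    SparseRegularPair (fun b a => G a b) ε d c m := by
  obtain ⟨hdens, hcodegA, hcodegB, hdegA, hdegB⟩ := hG
  refine ⟨fun Y X hY hX => ?_, hcodegB, hcodegA, hdegB, hdegA⟩
  rw [dens_flip]
  exact hdens X Y hX hY

lemma SparseSuperRegularPair.flip (hG : SparseSuperRegularPair G ε d dstar c m) :
    SparseSuperRegularPair (fun b a => G a b) ε d dstar c m :=
  ⟨hG.1.flip, hG.2.2, hG.2.1⟩

lemma SparseRegularPair.card_compl_nbhd_lt (hG : SparseRegularPair G ε d c m) (hε : ε < 1)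
    (hd : 0 < d) {S : Finset A} (hS : ε * m ≤ #S) :
    (#(nbhd G S)ᶜ : ℝ) < ε * m := by
  by_contra! hT
  have hzero : dens G S (nbhd G S)ᶜ = 0 :=
    dens_eq_zero_of_forall_not fun u hu v hv huv => by simp_all [nbhd]
  have := (hG.1 S _ hS hT).1
  rw [hzero] at this
  nlinarith

lemma SparseSuperRegularPair.card_le_card_nbhd (hG : SparseSuperRegularPair G ε d dstar c m)
    (hdstar : 0 < dstar) (hm : 0 < m) (hsize : c * m + ε * m * (c ^ 2 * m) ≤ (dstar * m) ^ 2)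
    {S : Finset A} (hS : #S ≤ ε * m) :
    #S ≤ #(nbhd G S) := by
  obtain ⟨⟨-, hcodeg, -, hdeg, -⟩, hmindeg, -⟩ := hG
  refine card_le_card_nbhd_of_codegree_le G (by positivity) (by positivity)
    (fun u _ => hmindeg u) (fun u _ => hdeg u) (fun u _ u' _ => hcodeg u u') ?_
  calc c * m + #S * (c ^ 2 * m) ≤ c * m + ε * m * (c ^ 2 * m) := by gcongr
    _ ≤ _ := hsize

end Regularity

section Matching

variable {A B : Type*} [Fintype A] [Fintype B] {G : A → B → Prop}

lemma card_le_card_nbhd_of_card_compl_le (hcard : Fintype.card A = Fintype.card B)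
    {S : Finset A} (h : #(nbhd G S)ᶜ ≤ #(nbhd (fun b a => G a b) (nbhd G S)ᶜ)) :
    #S ≤ #(nbhd G S) := by
  have hsub : nbhd (fun b a => G a b) (nbhd G S)ᶜ ⊆ Sᶜ := by
    intro u
    simp only [nbhd, mem_compl, mem_filter_univ, not_exists, not_and]
    exact fun ⟨v, hv, huv⟩ hu => hv u hu huv
  have hle := h.trans (card_le_card hsub)
  rw [card_compl, card_compl] at hle
  have := card_le_univ S
  have := card_le_univ (nbhd G S)
  omega

variable {ε d dstar c : ℝ} {m : ℕ}

theorem SparseSuperRegularPair.exists_equiv (hG : SparseSuperRegularPair G ε d dstar c m)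
    (hcard : Fintype.card A = Fintype.card B) (hε : ε < 1) (hd : 0 < d) (hdstar : 0 < dstar)
    (hm : 0 < m) (hsize : c * m + ε * m * (c ^ 2 * m) ≤ (dstar * m) ^ 2) :
    ∃ e : A ≃ B, ∀ a, G a (e a) := by
  have hall : ∀ S : Finset A, #S ≤ #(nbhd G S) := by
    intro S
    rcases le_or_gt (#S : ℝ) (ε * m) with hS | hS
    · exact hG.card_le_card_nbhd hdstar hm hsize hS
    · exact card_le_card_nbhd_of_card_compl_le hcard <| hG.flip.card_le_card_nbhd hdstar hm hsize
        (hG.1.card_compl_nbhd_lt hε hd hS.le).le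
  obtain ⟨f, hf, hGf⟩ := (Fintype.all_card_le_filter_rel_iff_exists_injective G).1 hall
  exact ⟨.ofBijective f ((Fintype.bijective_iff_injective_and_card f).2 ⟨hf, hcard⟩), hGf⟩

end Matching

lemma hierarchy_size_bound {ζ d d' ε : ℝ} {m : ℕ} (hζ : 0 < ζ) (hd : 0 < d) (hd' : 0 < d')
    (hε : ε ≤ ζ ^ 2 * d ^ 2 / 2) (hm : 2 / (ζ ^ 2 * d * d') ≤ m) :
    d' / d * m + ε * m * ((d' / d) ^ 2 * m) ≤ (ζ * d' * m) ^ 2 := by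
  rw [div_le_iff₀ (by positivity)] at hm
  have hdeg : d' / d * m ≤ (ζ * d' * m) ^ 2 / 2 := by
    rw [div_mul_eq_mul_div, div_le_iff₀ hd]
    nlinarith [mul_le_mul_of_nonneg_left hm (by positivity : (0 : ℝ) ≤ d' * m)]
  have hcodeg : ε * m * ((d' / d) ^ 2 * m) ≤ (ζ * d' * m) ^ 2 / 2 :=
    calc ε * m * ((d' / d) ^ 2 * m) ≤ ζ ^ 2 * d ^ 2 / 2 * m * ((d' / d) ^ 2 * m) := by gcongr
      _ = (ζ * d' * m) ^ 2 / 2 := by field_simp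
  linarith

/-- Lemma: perfect matchings in sparse superregular pairs.
With the hierarchy `0 < 1/m ≪ d' ≪ 1/k ≪ ε ≪ d ≪ ζ ≤ 1/2`: every
`(ε, d', ζd', d'/d)`-superregular bipartite graph with vertex classes of size `m`
(both `Fin m`) has a perfect matching. -/
theorem stmt18 : ∀ ζ : ℝ, 0 < ζ → ζ ≤ 1 / 2 →
    ∃ d₀ : ℝ, 0 < d₀ ∧ ∀ d : ℝ, 0 < d → d ≤ d₀ →
    ∃ ε₀ : ℝ, 0 < ε₀ ∧ ∀ ε : ℝ, 0 < ε → ε ≤ ε₀ →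
    ∃ k₀ : ℕ, ∀ k : ℕ, k₀ ≤ k →
    ∃ d'₀ : ℝ, 0 < d'₀ ∧ ∀ d' : ℝ, 0 < d' → d' ≤ d'₀ →
    ∃ m₀ : ℕ, ∀ m : ℕ, m₀ ≤ m →
    ∀ G : Fin m → Fin m → Prop,
    SparseSuperRegularPair G ε d' (ζ * d') (d' / d) m →
    ∃ σ : Equiv.Perm (Fin m), ∀ u, G u (σ u) := by
  intro ζ hζ hζ2
  refine ⟨1, one_pos, fun d hd hd1 => ⟨ζ ^ 2 * d ^ 2 / 2, by positivity, fun ε _ hεd =>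
    ⟨0, fun _ _ => ⟨1, one_pos, fun d' hd' _ => ⟨⌈2 / (ζ ^ 2 * d * d')⌉₊, fun m hm G hG => ?_⟩⟩⟩⟩⟩
  have hm' : 2 / (ζ ^ 2 * d * d') ≤ m := (Nat.le_ceil _).trans (by exact_mod_cast hm)
  have hmpos : 0 < m := by
    exact_mod_cast (show (0 : ℝ) < 2 / (ζ ^ 2 * d * d') by positivity).trans_le hm'
  have hζd : ζ * d ≤ 1 / 2 := by nlinarith
  have hε : ε < 1 := by nlinarith [mul_pos hζ hd]
  exact hG.exists_equiv rfl hε hd' (by positivity) hmpos (hierarchy_size_bound hζ hd hd' hεd hm')
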